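/- arXiv:2504.10787 — 3 statements merged into one kernel-verified Lean document; each statement's English description precedes it below -/
import Mathlib

section
/- Let a_1 a_2 … a_k be a finite greedy β-expansion of 1 for some β ∈ (1,2) (so each a_i ∈ {0,1} and a_k = 1) which is reversibly greedy, i.e. a_1a_2…a_k >_lex a_{k−i}a_{k−i−1}…a_2 (padded with trailing zeros to length k) for all 0 ≤ i ≤ k−2. Define b_i = a_i for 1 ≤ i ≤ k−1 and b_k = a_k − 1 = 0. Then the string b_1…b_k also satisfies the reversibility condition: b_1b_2…b_k >_lex b_{k−i}b_{k−i−1}…b_2 (padded with trailing zeros to length k) for all 0 ≤ i ≤ k−2. -/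
open Polynomial

/-- Strict lexicographic order on ℕ-indexed digit sequences:
`a` is lexicographically strictly less than `b`. -/
def LexLt (a b : ℕ → ℕ) : Prop :=
  ∃ m : ℕ, (∀ i < m, a i = b i) ∧ a m < b m

/-- `a` (0-indexed: `a n` is the digit `a_{n+1}` of `β^{-(n+1)}`) is a β-expansion of 1. -/
def IsBetaExpansion (β : ℝ) (a : ℕ → ℕ) : Prop :=
  (∀ n, a n ≤ 1) ∧ HasSum (fun n => (a n : ℝ) / β ^ (n + 1)) 1

/-- `a` is the greedy (lexicographically largest) β-expansion of 1. -/
def IsGreedyExpansion (β : ℝ) (a : ℕ → ℕ) : Prop :=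
  IsBetaExpansion β a ∧ ∀ b, IsBetaExpansion β b → b = a ∨ LexLt b a

/-- A Pisot number: a real algebraic integer `q > 1` all of whose other conjugates
have modulus strictly less than 1. -/
def IsPisot (q : ℝ) : Prop :=
  1 < q ∧ IsIntegral ℤ q ∧
    ∀ z : ℂ, (Polynomial.aeval z) (minpoly ℤ q) = 0 → z ≠ (q : ℂ) → ‖z‖ < 1

/-- A Salem number: a real algebraic integer `α > 1` all of whose other conjugates
have modulus at most 1, with at least one conjugate of modulus exactly 1. -/
def IsSalem (α : ℝ) : Prop :=
  1 < α ∧ IsIntegral ℤ α ∧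
    (∀ z : ℂ, (Polynomial.aeval z) (minpoly ℤ α) = 0 → z ≠ (α : ℂ) → ‖z‖ ≤ 1) ∧
    (∃ z : ℂ, (Polynomial.aeval z) (minpoly ℤ α) = 0 ∧ ‖z‖ = 1)

/-- The shift map `σ(a_1 a_2 a_3 …) = a_2 a_3 …`. -/
def shiftSeq (a : ℕ → ℕ) : ℕ → ℕ := fun n => a (n + 1)

/-- The reversibly greedy condition for the length-`K` string `a_1 … a_K`
(0-indexed: `a 0, …, a (K-1)`): for all `0 ≤ i ≤ K-2`, the string
`a_{K-i} a_{K-i-1} … a_2` (padded with trailing zeros) is lexicographically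
strictly smaller than `a_1 … a_K`. -/
def RevGreedy (a : ℕ → ℕ) (K : ℕ) : Prop :=
  ∀ i ≤ K - 2,
    LexLt (fun n => if n ≤ K - i - 2 then a (K - i - 1 - n) else 0)
          (fun n => if n < K then a n else 0)

/-- `Pcomp a j` is `P_j(x) = x^j - a_1 x^{j-1} - ⋯ - a_j` (digits 0-indexed). -/
noncomputable def Pcomp (a : ℕ → ℕ) (j : ℕ) : Polynomial ℤ :=
  Polynomial.X ^ j - ∑ i ∈ Finset.range j, Polynomial.C ((a i : ℤ)) * Polynomial.X ^ (j - 1 - i)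

/-- The eventually periodic digit sequence `first (w)^ω`. -/
def perSeq (first : ℕ) (w : List ℕ) : ℕ → ℕ :=
  fun n => if n = 0 then first else w.getD ((n - 1) % w.length) 0

/-- The string `a_2 … a_K` (digits 0-indexed). -/
def strTail (a : ℕ → ℕ) (K : ℕ) : List ℕ :=
  List.ofFn fun i : Fin (K - 1) => a ((i : ℕ) + 1)

/-- The full string `a_1 … a_K` (digits 0-indexed). -/
def fullStr (a : ℕ → ℕ) (K : ℕ) : List ℕ :=
  List.ofFn fun i : Fin K => a (i : ℕ)

/-- The block `a_{k+1} … a_{k+ℓ}` (digits 0-indexed). -/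
def perBlock (a : ℕ → ℕ) (k ℓ : ℕ) : List ℕ :=
  List.ofFn fun i : Fin ℓ => a (k + (i : ℕ))

/-- Replace the last digit `a_K` of a finite expansion by `a_K - 1 = 0`. -/
def modLast (a : ℕ → ℕ) (K : ℕ) : ℕ → ℕ := fun i => if i = K - 1 then 0 else a i

/-- The β-transformation `T_β(y) = βy - ⌊βy⌋`. -/
noncomputable def betaT (β y : ℝ) : ℝ := β * y - ⌊β * y⌋

/-- The greedy digits of `x`: `d_{n+1} = ⌊β T_β^n(x)⌋`. -/
noncomputable def greedyDigit (β x : ℝ) (n : ℕ) : ℤ := ⌊β * (betaT β)^[n] x⌋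

/-!
The first digit of a greedy β-expansion of 1 with `β < 2` is 1: writing `1 = 1/β + (β - 1)/β`,
the greedy digits of `β - 1 ∈ [0, 1)` (read off the β-transformation) give an expansion of 1
beginning with 1, and the greedy one is lexicographically at least as large.

Replacing `a_k` by `0` changes the reversed word `b_{k-i} … b_2` only when `i = 0`. A reversed
word beginning with `0` loses to `b_1 = 1` at once. Otherwise `i ≥ 1` and the comparison of
`a_{k-i} … a_2` with `a_1 … a_k` is decided before position `k`, because at position `k - i`
the reversed word is already padding `0` while `a_{k-i} ≠ 0`; there `b` and `a` agree.
-/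

open Set

lemma betaT_mem_Ico (β y : ℝ) : betaT β y ∈ Ico 0 1 :=
  ⟨Int.fract_nonneg _, Int.fract_lt_one _⟩

lemma iterate_betaT_mem_Ico {β y : ℝ} (hy : y ∈ Ico 0 1) (n : ℕ) :
    (betaT β)^[n] y ∈ Ico 0 1 := by
  cases n with
  | zero => exact hy
  | succ n => rw [Function.iterate_succ_apply']; exact betaT_mem_Ico β _

lemma greedyDigit_mem_Icc {β y : ℝ} (hβ0 : 0 ≤ β) (hβ2 : β ≤ 2) (hy : y ∈ Ico 0 1) (n : ℕ) :
    greedyDigit β y n ∈ Icc 0 1 := by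
  obtain ⟨hY0, hY1⟩ := iterate_betaT_mem_Ico (β := β) hy n
  have hlt : β * (betaT β)^[n] y < 2 := by nlinarith
  refine ⟨Int.floor_nonneg.2 (mul_nonneg hβ0 hY0), ?_⟩
  have : greedyDigit β y n < 2 := Int.floor_lt.2 (by exact_mod_cast hlt)
  omega

lemma iterate_betaT_succ (β y : ℝ) (n : ℕ) :
    (betaT β)^[n + 1] y = β * (betaT β)^[n] y - greedyDigit β y n := by
  rw [Function.iterate_succ_apply']
  rfl

lemma sum_greedyDigit_div_pow {β : ℝ} (hβ : β ≠ 0) (y : ℝ) (N : ℕ) :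
    ∑ n ∈ Finset.range N, (greedyDigit β y n : ℝ) / β ^ (n + 1) =
      y - (betaT β)^[N] y / β ^ N := by
  induction N with
  | zero => simp
  | succ N ih =>
    rw [Finset.sum_range_succ, ih, iterate_betaT_succ]
    field_simp
    ring

lemma hasSum_greedyDigit {β : ℝ} (hβ1 : 1 < β) {y : ℝ} (hy : y ∈ Ico 0 1) :
    HasSum (fun n => (greedyDigit β y n : ℝ) / β ^ (n + 1)) y := by
  have hβ0 : 0 < β := one_pos.trans hβ1
  have hdigit : ∀ n, 0 ≤ (greedyDigit β y n : ℝ) := fun n => by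
    exact_mod_cast Int.floor_nonneg.2 (mul_nonneg hβ0.le (iterate_betaT_mem_Ico hy n).1)
  rw [hasSum_iff_tendsto_nat_of_nonneg (fun n => div_nonneg (hdigit n) (by positivity))]
  simp_rw [sum_greedyDigit_div_pow hβ0.ne']
  have hrem : Filter.Tendsto (fun N => (betaT β)^[N] y / β ^ N) Filter.atTop (nhds 0) := by
    refine squeeze_zero (fun N => div_nonneg (iterate_betaT_mem_Ico hy N).1 (by positivity))
      (fun N => ?_) (tendsto_pow_atTop_nhds_zero_of_lt_one (inv_nonneg.2 hβ0.le)
        (inv_lt_one_of_one_lt₀ hβ1))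
    rw [inv_pow, div_eq_mul_inv]
    exact mul_le_of_le_one_left (by positivity) (iterate_betaT_mem_Ico hy N).2.le
  simpa using tendsto_const_nhds.sub hrem

lemma exists_isBetaExpansion_head_eq_one {β : ℝ} (hβ1 : 1 < β) (hβ2 : β < 2) :
    ∃ b, IsBetaExpansion β b ∧ b 0 = 1 := by
  have hy : β - 1 ∈ Ico 0 1 := ⟨by linarith, by linarith⟩
  have hdigit := greedyDigit_mem_Icc (by linarith) hβ2.le hy
  set d : ℕ → ℕ := fun n => (greedyDigit β (β - 1) n).toNat
  have hd : ∀ n, (d n : ℝ) = greedyDigit β (β - 1) n := fun n => by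
    exact_mod_cast Int.toNat_of_nonneg (hdigit n).1
  refine ⟨fun n => if n = 0 then 1 else d (n - 1), ⟨fun n => ?_, ?_⟩, rfl⟩
  · have := (hdigit (n - 1)).2
    dsimp only [d]
    split_ifs <;> omega
  · have hβ0 : β ≠ 0 := by positivity
    have htail : HasSum (fun n => (d n : ℝ) / β ^ (n + 1 + 1)) (1 - 1 / β) := by
      have hterm : (fun n => (d n : ℝ) / β ^ (n + 1 + 1)) =
          fun n => (greedyDigit β (β - 1) n : ℝ) / β ^ (n + 1) / β :=
        funext fun n => by rw [hd, pow_succ _ (n + 1), div_div]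
      rw [hterm, show 1 - 1 / β = (β - 1) / β by field_simp]
      exact (hasSum_greedyDigit hβ1 hy).div_const β
    rw [← hasSum_nat_add_iff' 1]
    simpa using htail

lemma LexLt.head_le {a b : ℕ → ℕ} (h : LexLt a b) : a 0 ≤ b 0 := by
  obtain ⟨m, hpre, hm⟩ := h
  cases m with
  | zero => exact hm.le
  | succ m => exact (hpre 0 m.succ_pos).le

lemma IsGreedyExpansion.head_eq_one {β : ℝ} (hβ1 : 1 < β) (hβ2 : β < 2) {a : ℕ → ℕ}
    (ha : IsGreedyExpansion β a) : a 0 = 1 := by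
  obtain ⟨b, hb, hb0⟩ := exists_isBetaExpansion_head_eq_one hβ1 hβ2
  have : b 0 ≤ a 0 := by
    rcases ha.2 b hb with rfl | hlt
    · rfl
    · exact hlt.head_le
  have := ha.1.1 0
  omega

lemma revGreedy_modLast {a : ℕ → ℕ} {k : ℕ} (hk : 2 ≤ k) (ha0 : a 0 ≠ 0)
    (hrev : RevGreedy a k) : RevGreedy (modLast a k) k := by
  intro i hi
  by_cases hlead : modLast a k (k - i - 1) = 0
  · refine ⟨0, fun j hj => absurd hj j.not_lt_zero, ?_⟩
    simp only [Nat.zero_le, if_true, Nat.sub_zero, hlead, show 0 < k by omega]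
    simpa [modLast, show 0 ≠ k - 1 by omega] using Nat.pos_of_ne_zero ha0
  · have hlead_ne : k - i - 1 ≠ k - 1 ∧ a (k - i - 1) ≠ 0 := by
      simpa [modLast, not_or] using hlead
    obtain ⟨m, hpre, hm⟩ := hrev i hi
    beta_reduce at hpre hm
    have hm_lt : m < k := by
      by_contra hm_lt
      simp [hm_lt] at hm
    have hm_ne_last : m ≠ k - 1 := by
      rintro rfl
      have := hpre (k - i - 1) (by omega)
      simp only [show ¬ k - i - 1 ≤ k - i - 2 by omega, show k - i - 1 < k by omega,
        if_true, if_false] at this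
      exact hlead_ne.2 this.symm
    refine ⟨m, fun j hj => ?_, ?_⟩
    · have := hpre j hj
      simp only [modLast]
      split_ifs at this ⊢ <;> omega
    · simp only [modLast]
      split_ifs at hm ⊢ <;> omega

theorem stmt0_general (β : ℝ) (hβ1 : 1 < β) (hβ2 : β < 2) (k : ℕ) (hk : 2 ≤ k)
    (a : ℕ → ℕ)
    (hgreedy : IsGreedyExpansion β a)
    (hrev : RevGreedy a k) :
    RevGreedy (modLast a k) k :=
  revGreedy_modLast hk (by simp [hgreedy.head_eq_one hβ1 hβ2]) hrev

/-- Proposition 1.9: if a finite greedy β-expansion `a_1 … a_k` of 1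
(β ∈ (1,2), digits in {0,1}, `a_k = 1`) is reversibly greedy, then the string
`b_1 … b_k` with `b_i = a_i` for `i < k` and `b_k = a_k - 1 = 0` also satisfies the
reversibility condition. -/
theorem stmt0 (β : ℝ) (hβ1 : 1 < β) (hβ2 : β < 2) (k : ℕ) (hk : 2 ≤ k)
    (a : ℕ → ℕ) (hdig : ∀ i, a i ≤ 1) (hak : a (k - 1) = 1)
    (hfin : ∀ n, k ≤ n → a n = 0)
    (hgreedy : IsGreedyExpansion β a)
    (hrev : RevGreedy a k) :
    RevGreedy (modLast a k) k :=
  stmt0_general β hβ1 hβ2 k hk a hgreedy hrev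
end

section
/- Let a = (a_n)_{n≥1} be a sequence with a_n ∈ {0,1} which is eventually periodic with preperiod k and period ℓ, i.e. a_{n+ℓ} = a_n for all n > k. If σ^j(a) <_lex a for every j with 1 ≤ j ≤ k+ℓ, then σ^j(a) <_lex a for every j ≥ 1, where σ(a_1a_2a_3…) = a_2a_3…. -/
open Polynomial

theorem shiftSeq_iterate_apply (a : ℕ → ℕ) (j n : ℕ) : shiftSeq^[j] a n = a (n + j) := by
  induction j generalizing n with
  | zero => rfl
  | succ j ih => rw [Function.iterate_succ_apply', shiftSeq, ih, Nat.add_right_comm, Nat.add_assoc]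

theorem shiftSeq_iterate_add_period {a : ℕ → ℕ} {k ℓ : ℕ}
    (hper : ∀ n, k ≤ n → a (n + ℓ) = a n) {j : ℕ} (hj : k ≤ j) :
    shiftSeq^[j + ℓ] a = shiftSeq^[j] a := by
  funext n
  rw [shiftSeq_iterate_apply, shiftSeq_iterate_apply, ← Nat.add_assoc, hper _ (by omega)]

theorem stmt2_general (a : ℕ → ℕ) (k ℓ : ℕ) (hℓ : 1 ≤ ℓ)
    (hper : ∀ n, k ≤ n → a (n + ℓ) = a n)
    (h : ∀ j : ℕ, 1 ≤ j → j ≤ k + ℓ → LexLt (shiftSeq^[j] a) a) :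
    ∀ j : ℕ, 1 ≤ j → LexLt (shiftSeq^[j] a) a := by
  intro j
  induction j using Nat.strong_induction_on with
  | _ j ih =>
    intro hj
    by_cases hsmall : j ≤ k + ℓ
    · exact h j hj hsmall
    · obtain ⟨i, rfl⟩ : ∃ i, j = i + ℓ := ⟨j - ℓ, by omega⟩
      rw [shiftSeq_iterate_add_period hper (by omega)]
      exact ih i (by omega) (by omega)

/-- for an eventually periodic {0,1}-sequence with preperiod `k` and
period `ℓ`, it suffices to check the Parry condition `σ^j(a) <_lex a` for
`1 ≤ j ≤ k + ℓ` in order to get it for all `j ≥ 1`. -/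
theorem stmt2 (a : ℕ → ℕ) (hdig : ∀ n, a n ≤ 1) (k ℓ : ℕ) (hℓ : 1 ≤ ℓ)
    (hper : ∀ n, k ≤ n → a (n + ℓ) = a n)
    (h : ∀ j : ℕ, 1 ≤ j → j ≤ k + ℓ → LexLt (shiftSeq^[j] a) a) :
    ∀ j : ℕ, 1 ≤ j → LexLt (shiftSeq^[j] a) a :=
  stmt2_general a k ℓ hℓ hper h
end

section
/- Let r ≥ 1 and q ≥ 3r be integers, let M(x) = x^q(x^{r+1} − 2x^r + x − 1) − (x^r + 1)(x − 1) (a polynomial of degree q + r + 1), let M^*(x) = x^{q+r+1} M(1/x) be its reciprocal, and let Q(x) = 1 + x + ⋯ + x^{r−1}. Then (x^q − 1) divides Q(x)·(M(x)·x^{q−r+1} − M^*(x)) in ℤ[x]. -/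
open Polynomial

/-- `M(x) = Φ^{C-}_{(r,q)}(x) = x^q(x^{r+1} - 2x^r + x - 1) - (x^r + 1)(x - 1)`. -/
noncomputable def M18 (r q : ℕ) : Polynomial ℤ :=
  Polynomial.X ^ q *
      (Polynomial.X ^ (r + 1) - 2 * Polynomial.X ^ r + Polynomial.X - 1) -
    (Polynomial.X ^ r + 1) * (Polynomial.X - 1)

/-! Modulo `X ^ q - 1` we have `M ≡ -X ^ r` and `M* ≡ -X`, where `M* = reflect (q + r + 1) M`.
Hence `M · X ^ (q - r + 1) ≡ -X ^ (q + 1) ≡ -X ≡ M*`, so `X ^ q - 1` already divides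
`M · X ^ (q - r + 1) - M*`, without the factor `Q`. -/

theorem Polynomial.reflect_X_pow_of_le {R : Type*} [Semiring R] {N n : ℕ} (h : n ≤ N) :
    reflect N (X ^ n : R[X]) = X ^ (N - n) := by
  rw [reflect_monomial, revAt_le h]

theorem M18_add_X_pow (r q : ℕ) :
    M18 r q + X ^ r = (X ^ q - 1) * (X ^ (r + 1) - 2 * X ^ r + X - 1) := by
  rw [M18]; ring

theorem reflect_M18_add_X (r q : ℕ) :
    reflect (q + r + 1) (M18 r q) + X = (X ^ q - 1) * ((X ^ r + 1) * (X - 1)) := by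
  have hM : M18 r q = X ^ (q + r + 1) - C 2 * X ^ (q + r) + X ^ (q + 1) - X ^ q
      - X ^ (r + 1) + X ^ r - X ^ 1 + X ^ 0 := by
    simp only [M18, map_ofNat]; ring
  rw [hM]
  simp (disch := omega) only [reflect_sub, reflect_add, reflect_C_mul, reflect_X_pow_of_le]
  rw [show q + r + 1 - (q + 1) = r by omega, show q + r + 1 - (r + 1) = q by omega,
    show q + r + 1 - r = q + 1 by omega, show q + r + 1 - q = r + 1 by omega]
  simp only [Nat.sub_self, Nat.add_sub_cancel, Nat.add_sub_cancel_left, Nat.sub_zero, map_ofNat]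
  ring

theorem X_pow_sub_one_dvd_M18_mul_sub_reflect {r q : ℕ} (hrq : r ≤ q) :
    (X ^ q - 1 : ℤ[X]) ∣ M18 r q * X ^ (q - r + 1) - reflect (q + r + 1) (M18 r q) := by
  have hX : (X : ℤ[X]) ^ r * X ^ (q - r + 1) = X * X ^ q := by
    rw [← pow_add, show r + (q - r + 1) = q + 1 by omega, pow_succ']
  refine ⟨(X ^ (r + 1) - 2 * X ^ r + X - 1) * X ^ (q - r + 1) - (X ^ r + 1) * (X - 1) - X, ?_⟩
  linear_combination X ^ (q - r + 1) * M18_add_X_pow r q - reflect_M18_add_X r q - hX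

theorem stmt18_general (r q : ℕ) (hq : 3 * r ≤ q) :
    (Polynomial.X ^ q - 1 : Polynomial ℤ) ∣
      ((∑ i ∈ Finset.range r, Polynomial.X ^ i) *
        (M18 r q * Polynomial.X ^ (q - r + 1) -
          Polynomial.reflect (q + r + 1) (M18 r q))) :=
  (X_pow_sub_one_dvd_M18_mul_sub_reflect (by omega)).mul_left _

/-- for `r ≥ 1` and `q ≥ 3r`, with `M = Φ^{C-}_{(r,q)}` (of degree
`q + r + 1`), `M^*(x) = x^{q+r+1} M(1/x)` and `Q(x) = 1 + x + ⋯ + x^{r-1}`, the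
polynomial `x^q - 1` divides `Q(x)·(M(x)·x^{q-r+1} - M^*(x))` in `ℤ[x]`. -/
theorem stmt18 (r q : ℕ) (hr : 1 ≤ r) (hq : 3 * r ≤ q) :
    (Polynomial.X ^ q - 1 : Polynomial ℤ) ∣
      ((∑ i ∈ Finset.range r, Polynomial.X ^ i) *
        (M18 r q * Polynomial.X ^ (q - r + 1) -
          Polynomial.reflect (q + r + 1) (M18 r q))) :=
  stmt18_general r q hq
end
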